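/- arXiv:1201.2816 — 2 statements merged into one kernel-verified Lean document; each statement's English description precedes it below -/
import Mathlib

section
/- Let (K, d) be a compact metric space and L > 0. Suppose C : K → ℝ satisfies C(x) ≥ 0 for every x ∈ K and the functional inequality C(x) ≤ C(x₀)·(1 + L·d(x, x₀)) + L·d(x, x₀)·C(x)·C(x₀) for all x, x₀ ∈ K. Then C is bounded above, i.e. there exists S ≥ 0 such that C(x) ≤ S for all x ∈ K. -/
/-!
Near any point `x₀` the factor `L * dist x x₀ * C x₀` is at most `1 / 2`, and then the inequality
can be solved for `C x`, giving `C x ≤ 2 * C x₀ + 1`. So `C` is locally bounded above, hence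
bounded above on the compact space `K`.
-/

open Filter Topology Set

theorem IsCompact.bddAbove_image_of_eventually_le {X α : Type*} [TopologicalSpace X]
    [Preorder α] [IsDirectedOrder α] [Nonempty α] {s : Set X} (hs : IsCompact s) {f : X → α}
    (hf : ∀ x ∈ s, ∃ b, ∀ᶠ y in 𝓝 x, f y ≤ b) : BddAbove (f '' s) := by
  refine hs.induction_on (p := fun t => BddAbove (f '' t)) (by simp)
    (fun _ _ hst ht => ht.mono (image_mono hst))
    (fun _ _ hs ht => by simpa only [image_union] using hs.union ht) fun x hx => ?_
  obtain ⟨b, hb⟩ := hf x hx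
  exact ⟨{y | f y ≤ b}, mem_nhdsWithin_of_mem_nhds hb, ⟨b, forall_mem_image.2 fun _ hy => hy⟩⟩

theorem le_two_mul_add_one_of_le_mul_add {a b δ : ℝ} (ha : 0 ≤ a)
    (h : a ≤ b * (1 + δ) + δ * a * b) (hδ : δ * b ≤ 1 / 2) : a ≤ 2 * b + 1 := by
  nlinarith

theorem uniform_bound_of_functional_inequality_general
    {K : Type*} [MetricSpace K] [CompactSpace K]
    (L : ℝ) (C : K → ℝ)
    (hC0 : ∀ x, 0 ≤ C x)
    (hC : ∀ x x₀ : K,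
      C x ≤ C x₀ * (1 + L * dist x x₀) + L * dist x x₀ * C x * C x₀) :
    ∃ S : ℝ, 0 ≤ S ∧ ∀ x, C x ≤ S := by
  have hlocal : ∀ x₀, ∀ᶠ x in 𝓝 x₀, C x ≤ 2 * C x₀ + 1 := by
    intro x₀
    have hsmall : Tendsto (fun x => L * dist x x₀ * C x₀) (𝓝 x₀) (𝓝 0) := by
      simpa using (((continuous_id.dist (continuous_const (y := x₀))).const_mul L).mul_const
        (C x₀)).tendsto x₀
    filter_upwards [hsmall.eventually_le_const (by norm_num : (0 : ℝ) < 1 / 2)] with x hx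
    exact le_two_mul_add_one_of_le_mul_add (hC0 x) (hC x x₀) hx
  obtain ⟨S, hS⟩ := isCompact_univ.bddAbove_image_of_eventually_le fun x₀ _ => ⟨_, hlocal x₀⟩
  exact ⟨max S 0, le_max_right S 0, fun x => (hS ⟨x, mem_univ x, rfl⟩).trans (le_max_left S 0)⟩

/-- Key compactness argument: if `C : K → ℝ` is nonnegative on a compact metric space
and satisfies the functional inequality
`C x ≤ C x₀ * (1 + L * dist x x₀) + L * dist x x₀ * C x * C x₀`,
then `C` is bounded above. -/
theorem uniform_bound_of_functional_inequality
    {K : Type*} [MetricSpace K] [CompactSpace K]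
    (L : ℝ) (hL : 0 < L) (C : K → ℝ)
    (hC0 : ∀ x, 0 ≤ C x)
    (hC : ∀ x x₀ : K,
      C x ≤ C x₀ * (1 + L * dist x x₀) + L * dist x x₀ * C x * C x₀) :
    ∃ S : ℝ, 0 ≤ S ∧ ∀ x, C x ≤ S :=
  uniform_bound_of_functional_inequality_general L C hC0 hC
end

section
/- Let X be a Banach space, p ∈ [1, ∞), N ∈ ℕ, and let S₁, …, S_N, T₁, …, T_N be bounded linear operators on X. Suppose there exists a bounded linear operator D on X such that T_j − S_j = S_j ∘ D ∘ (I − T_j) for every j. Assume the family (S_j) satisfies the discrete Rademacher p-bound with constant C₀ and the family (T_j) satisfies it with constant C. Then for all x₁, …, x_N ∈ X: Avg_p(ε ↦ ‖Σ_j ε_j T_j x_j‖) ≤ (C₀·(1 + ‖D‖) + ‖D‖·C₀·C) · Avg_p(ε ↦ ‖Σ_j ε_j x_j‖). -/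
open scoped BigOperators

/-- The sign `±1` attached to a Boolean. -/
def sgn (b : Bool) : ℝ := if b then 1 else -1

/-- The randomized `p`-average `(2^{-N} ∑_{ε ∈ {−1,1}^N} r(ε)^p)^{1/p}` of a family of
(nonnegative) reals indexed by sign vectors. -/
noncomputable def avgP (N : ℕ) (p : ℝ) (r : (Fin N → Bool) → ℝ) : ℝ :=
  ((2 : ℝ) ^ (-(N : ℝ)) * ∑ ε : Fin N → Bool, r ε ^ p) ^ (1 / p)

/-- A finite family of bounded operators satisfies the discrete Rademacher `p`-bound with
constant `C` (discrete formulation of `R`-boundedness). -/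
def RadBound {Z : Type*} [NormedAddCommGroup Z] [NormedSpace ℝ Z]
    (N : ℕ) (p C : ℝ) (T : Fin N → Z →L[ℝ] Z) : Prop :=
  ∀ z : Fin N → Z,
    avgP N p (fun ε => ‖∑ j, sgn (ε j) • T j (z j)‖) ≤
      C * avgP N p (fun ε => ‖∑ j, sgn (ε j) • z j‖)

lemma avgP_nonneg (N : ℕ) (p : ℝ) (r : (Fin N → Bool) → ℝ) (hr : ∀ ε, 0 ≤ r ε) :
    0 ≤ avgP N p r := by
  apply Real.rpow_nonneg
  apply mul_nonneg (by positivity)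
  exact Finset.sum_nonneg fun ε _ => Real.rpow_nonneg (hr ε) p

lemma avgP_mono (N : ℕ) {p : ℝ} (hp : 0 < p) {r s : (Fin N → Bool) → ℝ}
    (hr : ∀ ε, 0 ≤ r ε) (h : ∀ ε, r ε ≤ s ε) : avgP N p r ≤ avgP N p s := by
  apply Real.rpow_le_rpow
  · apply mul_nonneg (by positivity)
    exact Finset.sum_nonneg fun ε _ => Real.rpow_nonneg (hr ε) p
  · apply mul_le_mul_of_nonneg_left _ (by positivity)
    exact Finset.sum_le_sum fun ε _ => Real.rpow_le_rpow (hr ε) (h ε) hp.le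
  · positivity

lemma avgP_add_le (N : ℕ) {p : ℝ} (hp : 1 ≤ p) {f g : (Fin N → Bool) → ℝ}
    (hf : ∀ ε, 0 ≤ f ε) (hg : ∀ ε, 0 ≤ g ε) :
    avgP N p (fun ε => f ε + g ε) ≤ avgP N p f + avgP N p g := by
  have hw : (0:ℝ) ≤ (2 : ℝ) ^ (-(N : ℝ)) := by positivity
  have hsum : ∀ (h : (Fin N → Bool) → ℝ), (∀ ε, 0 ≤ h ε) →
      (0:ℝ) ≤ ∑ ε : Fin N → Bool, h ε ^ p := fun h hh =>
    Finset.sum_nonneg fun ε _ => Real.rpow_nonneg (hh ε) p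
  unfold avgP
  rw [Real.mul_rpow hw (hsum _ fun ε => add_nonneg (hf ε) (hg ε)),
    Real.mul_rpow hw (hsum f hf), Real.mul_rpow hw (hsum g hg), ← mul_add]
  apply mul_le_mul_of_nonneg_left _ (Real.rpow_nonneg hw _)
  exact Real.Lp_add_le_of_nonneg _ hp (fun ε _ => hf ε) (fun ε _ => hg ε)

lemma avgP_const_mul (N : ℕ) {p : ℝ} (hp : 0 < p) {c : ℝ} (hc : 0 ≤ c)
    {r : (Fin N → Bool) → ℝ} (hr : ∀ ε, 0 ≤ r ε) :
    avgP N p (fun ε => c * r ε) = c * avgP N p r := by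
  have hw : (0:ℝ) ≤ (2 : ℝ) ^ (-(N : ℝ)) := by positivity
  have hsum : (0:ℝ) ≤ ∑ ε : Fin N → Bool, r ε ^ p :=
    Finset.sum_nonneg fun ε _ => Real.rpow_nonneg (hr ε) p
  unfold avgP
  have : ∀ ε : Fin N → Bool, (c * r ε) ^ p = c ^ p * r ε ^ p := fun ε =>
    Real.mul_rpow hc (hr ε)
  simp_rw [this]
  rw [← Finset.mul_sum, mul_left_comm, Real.mul_rpow (Real.rpow_nonneg hc p)
    (mul_nonneg hw hsum)]
  congr 1
  rw [← Real.rpow_mul hc, mul_one_div, div_self hp.ne', Real.rpow_one]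

/-- Perturbation inequality for discrete Rademacher bounds: if `T j − S j = S j ∘ D ∘ (I − T j)`
and `(S j)` has Rademacher `p`-bound `C₀` while `(T j)` has Rademacher `p`-bound `C`, then the
family `(T j)` satisfies the bound with constant `C₀(1 + ‖D‖) + ‖D‖ C₀ C`. -/
theorem radBound_perturbation
    {X : Type*} [NormedAddCommGroup X] [NormedSpace ℝ X] [CompleteSpace X]
    (p : ℝ) (hp : 1 ≤ p) (N : ℕ)
    (S T : Fin N → X →L[ℝ] X) (D : X →L[ℝ] X)
    (hD : ∀ j, T j - S j =
      (S j).comp (D.comp (ContinuousLinearMap.id ℝ X - T j)))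
    (C₀ C : ℝ) (hC₀ : 0 ≤ C₀) (hC : 0 ≤ C)
    (hS : RadBound N p C₀ S) (hT : RadBound N p C T) :
    ∀ x : Fin N → X,
      avgP N p (fun ε => ‖∑ j, sgn (ε j) • T j (x j)‖) ≤
        (C₀ * (1 + ‖D‖) + ‖D‖ * C₀ * C) *
          avgP N p (fun ε => ‖∑ j, sgn (ε j) • x j‖) := by
  intro x
  have hp0 : 0 < p := lt_of_lt_of_le one_pos hp
  set A := avgP N p (fun ε => ‖∑ j, sgn (ε j) • x j‖) with hAdef
  set B := avgP N p (fun ε => ‖∑ j, sgn (ε j) • T j (x j)‖) with hBdef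
  have hA0 : 0 ≤ A := avgP_nonneg _ _ _ fun ε => norm_nonneg _
  have hB0 : 0 ≤ B := avgP_nonneg _ _ _ fun ε => norm_nonneg _
  set y : Fin N → X := fun j => x j + D (x j - T j (x j)) with hy
  -- the key operator identity applied pointwise
  have key : ∀ j, T j (x j) = S j (y j) := by
    intro j
    have h := congrArg (fun L : X →L[ℝ] X => L (x j)) (hD j)
    simp only [ContinuousLinearMap.sub_apply, ContinuousLinearMap.comp_apply,
      ContinuousLinearMap.id_apply] at h
    have : S j (y j) = S j (x j) + S j (D (x j - T j (x j))) := by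
      rw [hy]; exact map_add _ _ _
    rw [this, ← h]; abel
  have heq : B = avgP N p (fun ε => ‖∑ j, sgn (ε j) • S j (y j)‖) := by
    rw [hBdef]
    congr 1
    funext ε
    congr 1
    exact Finset.sum_congr rfl fun j _ => by rw [key j]
  have step1 : B ≤ C₀ * avgP N p (fun ε => ‖∑ j, sgn (ε j) • y j‖) := by
    rw [heq]; exact hS y
  have sumy : ∀ ε : Fin N → Bool, (∑ j, sgn (ε j) • y j) =
      (∑ j, sgn (ε j) • x j) +
        D ((∑ j, sgn (ε j) • x j) - (∑ j, sgn (ε j) • T j (x j))) := by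
    intro ε
    have h1 : ∀ j, sgn (ε j) • y j =
        sgn (ε j) • x j + D (sgn (ε j) • x j - sgn (ε j) • T j (x j)) := by
      intro j
      rw [hy]
      simp only [smul_add, ← smul_sub, map_smul]
    simp_rw [h1, Finset.sum_add_distrib, ← map_sum, Finset.sum_sub_distrib]
  have ptwise : ∀ ε : Fin N → Bool, ‖∑ j, sgn (ε j) • y j‖ ≤
      (1 + ‖D‖) * ‖∑ j, sgn (ε j) • x j‖ + ‖D‖ * ‖∑ j, sgn (ε j) • T j (x j)‖ := by
    intro ε
    rw [sumy ε]
    set a := ∑ j, sgn (ε j) • x j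
    set b := ∑ j, sgn (ε j) • T j (x j)
    calc ‖a + D (a - b)‖ ≤ ‖a‖ + ‖D (a - b)‖ := norm_add_le _ _
      _ ≤ ‖a‖ + ‖D‖ * ‖a - b‖ := by linarith [D.le_opNorm (a - b)]
      _ ≤ ‖a‖ + ‖D‖ * (‖a‖ + ‖b‖) := by
          have := norm_sub_le a b
          nlinarith [norm_nonneg D]
      _ = (1 + ‖D‖) * ‖a‖ + ‖D‖ * ‖b‖ := by ring
  have step2 : avgP N p (fun ε => ‖∑ j, sgn (ε j) • y j‖) ≤
      (1 + ‖D‖) * A + ‖D‖ * B := by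
    calc avgP N p (fun ε => ‖∑ j, sgn (ε j) • y j‖)
        ≤ avgP N p (fun ε => (1 + ‖D‖) * ‖∑ j, sgn (ε j) • x j‖ +
            ‖D‖ * ‖∑ j, sgn (ε j) • T j (x j)‖) :=
          avgP_mono N hp0 (fun ε => norm_nonneg _) ptwise
      _ ≤ avgP N p (fun ε => (1 + ‖D‖) * ‖∑ j, sgn (ε j) • x j‖) +
            avgP N p (fun ε => ‖D‖ * ‖∑ j, sgn (ε j) • T j (x j)‖) :=
          avgP_add_le N hp
            (fun ε => by positivity) (fun ε => by positivity)
      _ = (1 + ‖D‖) * A + ‖D‖ * B := by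
          rw [avgP_const_mul N hp0 (by positivity) (fun ε => norm_nonneg _),
            avgP_const_mul N hp0 (norm_nonneg D) (fun ε => norm_nonneg _)]
  have hTB : B ≤ C * A := hT x
  have hfinal : B ≤ C₀ * ((1 + ‖D‖) * A + ‖D‖ * B) :=
    step1.trans (mul_le_mul_of_nonneg_left step2 hC₀)
  nlinarith [mul_le_mul_of_nonneg_left hTB (mul_nonneg hC₀ (norm_nonneg D)),
    norm_nonneg D]
end
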